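/- Let P, H be symmetric n×n matrices with P ≻ 0, H ≻ 0, and H ≺ α·P for α ∈ (0,1). Suppose a trajectory s(k) satisfies the reward nonnegativity condition sᵀ(k)·H·s(k) − sᵀ(k+1)·P·s(k+1) ≥ 0 for all k. Then sᵀ(k+1)·P·s(k+1) ≤ α·sᵀ(k)·P·s(k) for all k, and hence s(1) ∈ Ω implies s(k) ∈ Ω for all k. -/

import Mathlib

/-!
The hypothesis `H ≺ α P` gives `sᵀ H s ≤ α sᵀ P s`, so a nonnegative subreward yields the
Lyapunov decrease `V(s(k+1)) ≤ sᵀ(k) H s(k) ≤ α V(s(k))` for `V(s) = sᵀ P s`. A sequence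
contracted by a factor `α ∈ [0, 1]` at every step cannot leave a sublevel set `{V ≤ c}` with
`c ≥ 0`, which for `c = 1` is the safety envelope `Ω`.
-/

open Matrix

theorem dotProduct_mulVec_le_of_posSemidef_sub {m : Type*} [Fintype m] {A B : Matrix m m ℝ}
    (h : (B - A).PosSemidef) (x : m → ℝ) : x ⬝ᵥ A *ᵥ x ≤ x ⬝ᵥ B *ᵥ x := by
  have := h.dotProduct_mulVec_nonneg x
  rwa [star_trivial, sub_mulVec, dotProduct_sub, sub_nonneg] at this

theorem dotProduct_mulVec_le_mul_of_subreward_nonneg {m : Type*} [Fintype m]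
    {P H : Matrix m m ℝ} {α : ℝ} (hHP : (α • P - H).PosSemidef) {x y : m → ℝ}
    (hreward : 0 ≤ x ⬝ᵥ H *ᵥ x - y ⬝ᵥ P *ᵥ y) : y ⬝ᵥ P *ᵥ y ≤ α * (x ⬝ᵥ P *ᵥ x) :=
  calc y ⬝ᵥ P *ᵥ y ≤ x ⬝ᵥ H *ᵥ x := sub_nonneg.mp hreward
    _ ≤ x ⬝ᵥ (α • P) *ᵥ x := dotProduct_mulVec_le_of_posSemidef_sub hHP x
    _ = α * (x ⬝ᵥ P *ᵥ x) := by rw [smul_mulVec, dotProduct_smul, smul_eq_mul]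

theorem le_of_succ_le_mul_of_le {v : ℕ → ℝ} {α c : ℝ} (hα0 : 0 ≤ α) (hα1 : α ≤ 1) (hc : 0 ≤ c)
    (hv : ∀ k, v (k + 1) ≤ α * v k) {m : ℕ} (hm : v m ≤ c) : ∀ k, m ≤ k → v k ≤ c := by
  intro k hk
  induction k, hk using Nat.le_induction with
  | base => exact hm
  | succ k _ ih =>
    calc v (k + 1) ≤ α * v k := hv k
      _ ≤ α * c := mul_le_mul_of_nonneg_left ih hα0
      _ ≤ c := mul_le_of_le_one_left hc hα1

theorem subreward_nonneg_implies_invariance_general (n : ℕ)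
    (P H : Matrix (Fin n) (Fin n) ℝ)
    (α : ℝ) (hα0 : 0 < α) (hα1 : α < 1)
    (hHP : (α • P - H).PosDef)
    (s : ℕ → (Fin n → ℝ))
    (hreward : ∀ k : ℕ,
      0 ≤ (s k) ⬝ᵥ H.mulVec (s k) - (s (k + 1)) ⬝ᵥ P.mulVec (s (k + 1))) :
    (∀ k : ℕ, (s (k + 1)) ⬝ᵥ P.mulVec (s (k + 1)) ≤ α * ((s k) ⬝ᵥ P.mulVec (s k))) ∧
    ((s 1) ⬝ᵥ P.mulVec (s 1) ≤ 1 →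
      ∀ k : ℕ, 1 ≤ k → (s k) ⬝ᵥ P.mulVec (s k) ≤ 1) := by
  have hdecay : ∀ k : ℕ, (s (k + 1)) ⬝ᵥ P.mulVec (s (k + 1)) ≤ α * ((s k) ⬝ᵥ P.mulVec (s k)) :=
    fun k => dotProduct_mulVec_le_mul_of_subreward_nonneg hHP.posSemidef (hreward k)
  exact ⟨hdecay, le_of_succ_le_mul_of_le (v := fun k => s k ⬝ᵥ P *ᵥ s k)
    hα0.le hα1.le zero_le_one hdecay⟩

theorem subreward_nonneg_implies_invariance (n : ℕ)
    (P H : Matrix (Fin n) (Fin n) ℝ)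
    (hP : P.PosDef) (hH : H.PosDef)
    (α : ℝ) (hα0 : 0 < α) (hα1 : α < 1)
    (hHP : (α • P - H).PosDef)
    (s : ℕ → (Fin n → ℝ))
    (hreward : ∀ k : ℕ,
      0 ≤ (s k) ⬝ᵥ H.mulVec (s k) - (s (k + 1)) ⬝ᵥ P.mulVec (s (k + 1))) :
    (∀ k : ℕ, (s (k + 1)) ⬝ᵥ P.mulVec (s (k + 1)) ≤ α * ((s k) ⬝ᵥ P.mulVec (s k))) ∧
    ((s 1) ⬝ᵥ P.mulVec (s 1) ≤ 1 →
      ∀ k : ℕ, 1 ≤ k → (s k) ⬝ᵥ P.mulVec (s k) ≤ 1) :=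
  subreward_nonneg_implies_invariance_general n P H α hα0 hα1 hHP s hreward
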